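/- Let η, ε, α, σ, λ ∈ ℝ, D ≠ 0, and let A be the 2×2 matrix with rows [η, -1] and [εα, -εσ]. Let (v̄(t), w̄(t)) be the solution of the deterministic system v̄' = η v̄ - w̄, w̄' = ε(α v̄ - σ w̄ - λ) with initial condition (v₀, w₀), and let Θ(t) = D² ∫₀ᵗ (e^{As} e₂)(e^{As} e₂)ᵀ ds, which is positive definite for t > 0. Define, for t > 0, the Gaussian density p_t(v,w) = (2π√(det Θ(t)))^{-1} exp(-½ Δzᵀ Θ(t)^{-1} Δz) where Δz = (v - v̄(t), w - w̄(t))ᵀ. Then p satisfies the Fokker–Planck equation: for all t > 0 and all (v,w) ∈ ℝ², ∂p_t/∂t = -∂/∂v[(ηv - w) p_t] - ∂/∂w[ε(αv - σw - λ) p_t - (D²/2) ∂p_t/∂w]. -/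

import Mathlib

/-!
The covariance `Θ(t) = D² ∫₀ᵗ u uᵀ`, with `u(s) = e^{sA} e₂`, satisfies the Lyapunov equation
`Θ' = AΘ + ΘAᵀ + D² e₂e₂ᵀ`: differentiating under the integral gives `D² u(t)u(t)ᵀ`, and integrating
`(u uᵀ)' = A u uᵀ + u uᵀ Aᵀ` from `0` gives `u(t)u(t)ᵀ = e₂e₂ᵀ + AΘ + ΘAᵀ`. For a Gaussian density
whose mean follows the drift and whose covariance follows this Lyapunov equation, both sides of the
Fokker–Planck equation are the density times the same explicit rational function of `(v, w)`.
-/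

open Real Matrix

theorem hasDerivAt_exp_smul_mulVec {ι : Type*} [Fintype ι] [DecidableEq ι]
    (A : Matrix ι ι ℝ) (x : ι → ℝ) (s : ℝ) :
    HasDerivAt (fun s : ℝ => NormedSpace.exp (s • A) *ᵥ x)
      (A *ᵥ (NormedSpace.exp (s • A) *ᵥ x)) s := by
  let _ : NormedRing (Matrix ι ι ℝ) := Matrix.linftyOpNormedRing
  let _ : NormedAlgebra ℝ (Matrix ι ι ℝ) := Matrix.linftyOpNormedAlgebra
  let L := LinearMap.toContinuousLinearMap ((mulVecBilin ℝ ℝ (m := ι) (n := ι)).flip x)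
  rw [mulVec_mulVec]
  exact L.hasFDerivAt.comp_hasDerivAt s (hasDerivAt_exp_smul_const' A s)

section GramIntegral

variable {ι : Type*}

noncomputable def gramIntegral (u : ℝ → ι → ℝ) (t : ℝ) : Matrix ι ι ℝ :=
  Matrix.of fun i j => ∫ s in (0 : ℝ)..t, u s i * u s j

theorem isSymm_gramIntegral (u : ℝ → ι → ℝ) (t : ℝ) : (gramIntegral u t).IsSymm := by
  ext i j
  simp only [gramIntegral, transpose_apply, of_apply, mul_comm]

theorem hasDerivAt_gramIntegral_apply [Fintype ι] {A : Matrix ι ι ℝ} {u : ℝ → ι → ℝ}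
    (hu : ∀ s, HasDerivAt u (A *ᵥ u s) s) (t : ℝ) (i j : ι) :
    HasDerivAt (fun τ => gramIntegral u τ i j)
      ((A * gramIntegral u t + gramIntegral u t * Aᵀ) i j + u 0 i * u 0 j) t := by
  have hcoord (k : ι) (s : ℝ) : HasDerivAt (fun s => u s k) ((A *ᵥ u s) k) s :=
    hasDerivAt_pi.mp (hu s) k
  have hprod (k l : ι) : Continuous fun s => u s k * u s l :=
    have hcont (k : ι) : Continuous fun s => u s k :=
      continuous_iff_continuousAt.mpr fun s => (hcoord k s).continuousAt
    (hcont k).mul (hcont l)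
  have hint (c : ι → ℝ) (f : ι → ι × ι) : IntervalIntegrable
      (fun s => ∑ k, c k * (u s (f k).1 * u s (f k).2)) MeasureTheory.volume 0 t :=
    (continuous_finsetSum _ fun k _ => continuous_const.mul (hprod _ _)).intervalIntegrable 0 t
  have hftc : u t i * u t j - u 0 i * u 0 j =
      (A * gramIntegral u t + gramIntegral u t * Aᵀ) i j := by
    have hderiv : ∀ s ∈ Set.uIcc (0 : ℝ) t, HasDerivAt (fun s => u s i * u s j)
        (∑ k, A i k * (u s k * u s j) + ∑ k, A j k * (u s i * u s k)) s := by
      intro s _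
      refine ((hcoord i s).mul (hcoord j s)).congr_deriv ?_
      simp only [mulVec, dotProduct, Finset.sum_mul, Finset.mul_sum]
      congr 1 <;> exact Finset.sum_congr rfl fun k _ => by ring
    rw [← intervalIntegral.integral_eq_sub_of_hasDerivAt hderiv
        ((hint (A i) fun k => (k, j)).add (hint (A j) fun k => (i, k))),
      intervalIntegral.integral_add (hint (A i) fun k => (k, j)) (hint (A j) fun k => (i, k)),
      intervalIntegral.integral_finsetSum
        fun k _ => (hprod k j).intervalIntegrable 0 t |>.const_mul _,
      intervalIntegral.integral_finsetSum
        fun k _ => (hprod i k).intervalIntegrable 0 t |>.const_mul _]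
    simp only [intervalIntegral.integral_const_mul, Matrix.add_apply, mul_apply, transpose_apply,
      gramIntegral, of_apply]
    exact congrArg _ (Finset.sum_congr rfl fun _ _ => mul_comm _ _)
  rw [← hftc, sub_add_cancel]
  exact ((hprod i j).integral_hasStrictDerivAt 0 t).hasDerivAt

end GramIntegral

theorem hasDerivAt_fhnCovariance {η ε α σ D : ℝ} {u : ℝ → Fin 2 → ℝ}
    (hu : ∀ s, HasDerivAt u (!![η, -1; ε * α, -(ε * σ)] *ᵥ u s) s) (hu0 : u 0 = ![0, 1])
    {Θ : ℝ → Matrix (Fin 2) (Fin 2) ℝ} (hΘ : ∀ τ, Θ τ = D ^ 2 • gramIntegral u τ) (t : ℝ) :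
    HasDerivAt (fun τ => Θ τ 0 0) (2 * (η * Θ t 0 0 - Θ t 0 1)) t ∧
    HasDerivAt (fun τ => Θ τ 0 1) (ε * α * Θ t 0 0 + (η - ε * σ) * Θ t 0 1 - Θ t 1 1) t ∧
    HasDerivAt (fun τ => Θ τ 1 1) (2 * ε * (α * Θ t 0 1 - σ * Θ t 1 1) + D ^ 2) t := by
  have hsymm := (isSymm_gramIntegral u t).apply 0 1
  have h (i j : Fin 2) := (hasDerivAt_gramIntegral_apply hu t i j).const_mul (D ^ 2)
  simp only [hΘ, Matrix.smul_apply, smul_eq_mul]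
  refine ⟨(h 0 0).congr_deriv ?_, (h 0 1).congr_deriv ?_, (h 1 1).congr_deriv ?_⟩ <;>
    simp only [Matrix.add_apply, mul_apply, transpose_apply, Fin.sum_univ_two, hu0, hsymm,
      of_apply, cons_val', cons_val_zero, cons_val_one, cons_val_fin_one, mul_zero, add_zero] <;>
    ring

theorem det_fin_two_of_isSymm {K : Type*} [CommRing K] {M : Matrix (Fin 2) (Fin 2) K}
    (hM : M.IsSymm) : M.det = M 0 0 * M 1 1 - M 0 1 ^ 2 := by
  rw [det_fin_two, hM.apply 0 1]
  ring

theorem dotProduct_inv_mulVec_fin_two_of_isSymm {K : Type*} [Field K]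
    {M : Matrix (Fin 2) (Fin 2) K} (hM : M.IsSymm) (x y : K) :
    ![x, y] ⬝ᵥ (M⁻¹ *ᵥ ![x, y]) =
      (M 0 0 * M 1 1 - M 0 1 ^ 2)⁻¹ * (M 1 1 * x ^ 2 - 2 * M 0 1 * x * y + M 0 0 * y ^ 2) := by
  rw [inv_def, adjugate_fin_two, det_fin_two, hM.apply 0 1, Ring.inverse_eq_inv']
  simp only [dotProduct, mulVec, Matrix.smul_apply, of_apply, cons_val', cons_val_fin_one,
    smul_eq_mul, Fin.sum_univ_two, cons_val_zero, cons_val_one]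
  ring

/-- The normal density on `ℝ²` with mean `(m, n)` and covariance matrix `!![a, b; b, c]`. -/
noncomputable def gaussian2 (a b c m n v w : ℝ) : ℝ :=
  (2 * π * √(a * c - b ^ 2))⁻¹ *
    exp (-(1 / 2) * ((a * c - b ^ 2)⁻¹ *
      (c * (v - m) ^ 2 - 2 * b * (v - m) * (w - n) + a * (w - n) ^ 2)))

section Gaussian2

variable (a b c m n : ℝ)

theorem hasDerivAt_gaussian2_fst (v w : ℝ) :
    HasDerivAt (fun x => gaussian2 a b c m n x w)
      (-((c * (v - m) - b * (w - n)) / (a * c - b ^ 2)) * gaussian2 a b c m n v w) v := by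
  have hx : HasDerivAt (fun x => x - m) 1 v := (hasDerivAt_id v).sub_const m
  have hN := (((hx.pow 2).const_mul c).sub ((hx.const_mul (2 * b)).mul_const (w - n))).add_const
    (a * (w - n) ^ 2)
  refine ((((hN.const_mul (a * c - b ^ 2)⁻¹).const_mul (-(1 / 2))).exp).const_mul
    (2 * π * √(a * c - b ^ 2))⁻¹).congr_deriv ?_
  simp only [gaussian2, Pi.sub_apply, Pi.pow_apply]
  ring

theorem hasDerivAt_gaussian2_snd (v w : ℝ) :
    HasDerivAt (fun y => gaussian2 a b c m n v y)
      (-((a * (w - n) - b * (v - m)) / (a * c - b ^ 2)) * gaussian2 a b c m n v w) w := by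
  have hy : HasDerivAt (fun y => y - n) 1 w := (hasDerivAt_id w).sub_const n
  have hN := (((hy.const_mul (2 * b * (v - m))).const_sub (c * (v - m) ^ 2))).add
    ((hy.pow 2).const_mul a)
  refine ((((hN.const_mul (a * c - b ^ 2)⁻¹).const_mul (-(1 / 2))).exp).const_mul
    (2 * π * √(a * c - b ^ 2))⁻¹).congr_deriv ?_
  simp only [gaussian2, Pi.add_apply, Pi.pow_apply]
  ring

end Gaussian2

section FokkerPlanck

variable (η ε α σ lam D : ℝ) {a b c m n : ℝ → ℝ} {t : ℝ}
  (ha : HasDerivAt a (2 * (η * a t - b t)) t)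
  (hb : HasDerivAt b (ε * α * a t + (η - ε * σ) * b t - c t) t)
  (hc : HasDerivAt c (2 * ε * (α * b t - σ * c t) + D ^ 2) t)
  (hm : HasDerivAt m (η * m t - n t) t)
  (hn : HasDerivAt n (ε * (α * m t - σ * n t - lam)) t)
  (hΔ : 0 < a t * c t - b t ^ 2)
include ha hb hc hm hn hΔ

theorem hasDerivAt_gaussian2_of_lyapunov (v w : ℝ) :
    HasDerivAt (fun τ => gaussian2 (a τ) (b τ) (c τ) (m τ) (n τ) v w)
      ((ε * σ - η
        + (η * v - w) * ((c t * (v - m t) - b t * (w - n t)) / (a t * c t - b t ^ 2))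
        + ε * (α * v - σ * w - lam) * ((a t * (w - n t) - b t * (v - m t)) / (a t * c t - b t ^ 2))
        + D ^ 2 / 2 * (((a t * (w - n t) - b t * (v - m t)) / (a t * c t - b t ^ 2)) ^ 2
          - a t / (a t * c t - b t ^ 2))) * gaussian2 (a t) (b t) (c t) (m t) (n t) v w) t := by
  have hsqrt : 0 < √(a t * c t - b t ^ 2) := Real.sqrt_pos.mpr hΔ
  have hdet := (ha.mul hc).sub (hb.pow 2)
  have hnorm := ((hdet.sqrt hΔ.ne').const_mul (2 * π)).inv (by positivity)
  have hx := hm.const_sub v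
  have hy := hn.const_sub w
  have hN := ((hc.mul (hx.pow 2)).sub (((hb.const_mul 2).mul hx).mul hy)).add (ha.mul (hy.pow 2))
  refine (hnorm.mul (((hdet.inv hΔ.ne').mul hN).const_mul (-(1 / 2))).exp).congr_deriv ?_
  simp only [gaussian2, Pi.sub_apply, Pi.add_apply, Pi.mul_apply, Pi.pow_apply, Pi.inv_apply]
  have hsq : √(a t * c t - b t ^ 2) ^ 2 = a t * c t - b t ^ 2 := Real.sq_sqrt hΔ.le
  field_simp
  rw [hsq]
  ring

theorem gaussian2_fokkerPlanck (v w : ℝ) :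
    deriv (fun τ => gaussian2 (a τ) (b τ) (c τ) (m τ) (n τ) v w) t =
      -deriv (fun x => (η * x - w) * gaussian2 (a t) (b t) (c t) (m t) (n t) x w) v
      - deriv (fun y => ε * (α * v - σ * y - lam) * gaussian2 (a t) (b t) (c t) (m t) (n t) v y
          - D ^ 2 / 2 * deriv (fun y' => gaussian2 (a t) (b t) (c t) (m t) (n t) v y') y) w := by
  have hgrad := hasDerivAt_gaussian2_snd (a t) (b t) (c t) (m t) (n t) v
  have hdrift := (((hasDerivAt_id v).const_mul η).sub_const w).mul
    (hasDerivAt_gaussian2_fst (a t) (b t) (c t) (m t) (n t) v w)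
  have hflux := (((((hasDerivAt_id w).const_mul σ).const_sub (α * v)).sub_const lam).const_mul ε
    |>.mul (hgrad w)).sub (((((((hasDerivAt_id w).sub_const (n t)).const_mul (a t)).sub_const
      (b t * (v - m t))).div_const (a t * c t - b t ^ 2)).neg.mul (hgrad w)).const_mul (D ^ 2 / 2))
  simp only [Pi.mul_def, Pi.sub_def, Pi.neg_def, id] at hdrift hflux
  rw [funext fun y => (hgrad y).deriv]
  beta_reduce
  rw [hflux.deriv, hdrift.deriv,
    (hasDerivAt_gaussian2_of_lyapunov η ε α σ lam D ha hb hc hm hn hΔ v w).deriv]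
  ring

end FokkerPlanck

theorem stmt15_general (η ε α σ lam D : ℝ)
    (A : Matrix (Fin 2) (Fin 2) ℝ) (hA : A = !![η, -1; ε * α, -(ε * σ)])
    (vbar wbar : ℝ → ℝ)
    (hvbar : ∀ t : ℝ, HasDerivAt vbar (η * vbar t - wbar t) t)
    (hwbar : ∀ t : ℝ, HasDerivAt wbar (ε * (α * vbar t - σ * wbar t - lam)) t)
    (Θ : ℝ → Matrix (Fin 2) (Fin 2) ℝ)
    (hΘ : ∀ (t : ℝ) (i j : Fin 2), Θ t i j =
      D ^ 2 * ∫ s in (0:ℝ)..t,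
        ((NormedSpace.exp (s • A)).mulVec ![0, 1]) i *
        ((NormedSpace.exp (s • A)).mulVec ![0, 1]) j)
    (hpos : ∀ t : ℝ, 0 < t → (Θ t).PosDef)
    (p : ℝ → ℝ → ℝ → ℝ)
    (hp : ∀ t v w : ℝ, p t v w =
      (2 * Real.pi * Real.sqrt (Θ t).det)⁻¹ *
        Real.exp (-(1 / 2) *
          (![v - vbar t, w - wbar t] ⬝ᵥ ((Θ t)⁻¹ *ᵥ ![v - vbar t, w - wbar t])))) :
    ∀ t : ℝ, 0 < t → ∀ v w : ℝ,
      deriv (fun τ => p τ v w) t =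
        -(deriv (fun x => (η * x - w) * p t x w) v)
        - deriv (fun y => ε * (α * v - σ * y - lam) * p t v y
            - D ^ 2 / 2 * deriv (fun y' => p t v y') y) w := by
  intro t ht v w
  set u : ℝ → Fin 2 → ℝ := fun s => NormedSpace.exp (s • A) *ᵥ ![0, 1]
  have hΘu : ∀ τ, Θ τ = D ^ 2 • gramIntegral u τ := fun τ => by ext i j; exact hΘ τ i j
  have hsymm : ∀ τ, (Θ τ).IsSymm := fun τ => hΘu τ ▸ (isSymm_gramIntegral u τ).smul (D ^ 2)
  have hu : ∀ s, HasDerivAt u (A *ᵥ u s) s := hasDerivAt_exp_smul_mulVec A ![0, 1]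
  have hu0 : u 0 = ![0, 1] := by simp only [u, zero_smul, NormedSpace.exp_zero, one_mulVec]
  subst hA
  obtain ⟨ha, hb, hc⟩ := hasDerivAt_fhnCovariance hu hu0 hΘu t
  have hp' : p = fun τ v w => gaussian2 (Θ τ 0 0) (Θ τ 0 1) (Θ τ 1 1) (vbar τ) (wbar τ) v w := by
    funext τ v w
    rw [hp, det_fin_two_of_isSymm (hsymm τ), dotProduct_inv_mulVec_fin_two_of_isSymm (hsymm τ)]
    rfl
  have hΔ := det_fin_two_of_isSymm (hsymm t) ▸ (hpos t ht).det_pos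
  subst hp'
  exact gaussian2_fokkerPlanck η ε α σ lam D ha hb hc (hvbar t) (hwbar t) hΔ v w

/-- The Gaussian transition density of the Ornstein–Uhlenbeck process
arising from a linear piece of the PWL FitzHugh–Nagumo system (mean given by the
deterministic solution, covariance `Θ(t)`) satisfies the Fokker–Planck equation
`∂p/∂t = -∂/∂v[(ηv - w)p] - ∂/∂w[ε(αv - σw - λ)p - (D²/2) ∂p/∂w]` for all `t > 0`. -/
theorem stmt15 (η ε α σ lam D v0 w0 : ℝ) (hD : D ≠ 0)
    (A : Matrix (Fin 2) (Fin 2) ℝ) (hA : A = !![η, -1; ε * α, -(ε * σ)])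
    (vbar wbar : ℝ → ℝ) (hv0 : vbar 0 = v0) (hw0 : wbar 0 = w0)
    (hvbar : ∀ t : ℝ, HasDerivAt vbar (η * vbar t - wbar t) t)
    (hwbar : ∀ t : ℝ, HasDerivAt wbar (ε * (α * vbar t - σ * wbar t - lam)) t)
    (Θ : ℝ → Matrix (Fin 2) (Fin 2) ℝ)
    (hΘ : ∀ (t : ℝ) (i j : Fin 2), Θ t i j =
      D ^ 2 * ∫ s in (0:ℝ)..t,
        ((NormedSpace.exp (s • A)).mulVec ![0, 1]) i *
        ((NormedSpace.exp (s • A)).mulVec ![0, 1]) j)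
    (hpos : ∀ t : ℝ, 0 < t → (Θ t).PosDef)
    (p : ℝ → ℝ → ℝ → ℝ)
    (hp : ∀ t v w : ℝ, p t v w =
      (2 * Real.pi * Real.sqrt (Θ t).det)⁻¹ *
        Real.exp (-(1 / 2) *
          (![v - vbar t, w - wbar t] ⬝ᵥ ((Θ t)⁻¹ *ᵥ ![v - vbar t, w - wbar t])))) :
    ∀ t : ℝ, 0 < t → ∀ v w : ℝ,
      deriv (fun τ => p τ v w) t =
        -(deriv (fun x => (η * x - w) * p t x w) v)
        - deriv (fun y => ε * (α * v - σ * y - lam) * p t v y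
            - D ^ 2 / 2 * deriv (fun y' => p t v y') y) w :=
  stmt15_general η ε α σ lam D A hA vbar wbar hvbar hwbar Θ hΘ hpos p hp
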